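/- Let t₂ be a positive integer and q₁ : ℕ → ℕ, q₂ : [t₂] → ℕ be non-decreasing functions with 1 + q₁(1) ≤ t₂. Let G be a graph, D a q₁-unbreakable vertex set in G (i.e., (q₁(i),i)-unbreakable for every i in the domain), and A a vertex set that is q₂-unbreakability-tied to D. Then A is q₃-unbreakable, where q₃(i) = q₂(i + q₁(i)) and the domain of q₃ is [t₃] with t₃ the largest integer j such that j + q₁(j) ≤ t₂. -/

import Mathlib

open Finset

variable {V : Type*} [Fintype V] [DecidableEq V]

/-- A separation of a graph: a pair of vertex sets covering all vertices with no edge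
between the two strict sides. Its order is `(A ∩ B).card`. -/
def IsSep (G : SimpleGraph V) (A B : Finset V) : Prop :=
  A ∪ B = Finset.univ ∧
    ∀ a ∈ A, a ∉ B → ∀ b ∈ B, b ∉ A → ¬ G.Adj a b

/-- The `k`-improved graph `G^⟨k⟩`: `x` and `y` are adjacent iff they are distinct and no
separation of `G` of order at most `k` separates them (i.e. `μ_G(x,y) > k`). -/
def ImprovedGraph (G : SimpleGraph V) (k : ℕ) : SimpleGraph V where
  Adj x y := x ≠ y ∧ ∀ A B : Finset V, IsSep G A B → (A ∩ B).card ≤ k →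
    ¬ ((x ∈ A ∧ x ∉ B ∧ y ∈ B ∧ y ∉ A) ∨ (y ∈ A ∧ y ∉ B ∧ x ∈ B ∧ x ∉ A))
  symm := by
    constructor
    rintro x y ⟨hxy, h⟩
    exact ⟨hxy.symm, fun A B hs ho hc => h A B hs ho hc.symm⟩
  loopless := ⟨fun x h => h.1 rfl⟩

/-- `S` is `(q,k)`-unbreakable in `G`: every separation of order at most `k` has at most `q`
vertices of `S` on one of its sides. -/
def UnbreakableSet (G : SimpleGraph V) (S : Finset V) (q k : ℕ) : Prop :=
  ∀ A B : Finset V, IsSep G A B → (A ∩ B).card ≤ k →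
    (A ∩ S).card ≤ q ∨ (B ∩ S).card ≤ q

/-- A clique separation: both strict sides nonempty and the separator is a clique. -/
def IsCliqueSep (G : SimpleGraph V) (A B : Finset V) : Prop :=
  IsSep G A B ∧ (A \ B).Nonempty ∧ (B \ A).Nonempty ∧ G.IsClique (↑(A ∩ B) : Set V)

/-- `y` is reachable from `x` in `G − W`. -/
def AvoidReach (G : SimpleGraph V) (W : Finset V) (x y : V) : Prop :=
  ∃ p : G.Walk x y, ∀ v ∈ p.support, v ∉ W

/-- `W` is an `X`-`Y` separator: no vertex of `Y \ W` is reachable from `X \ W` in `G − W`. -/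
def IsSepSet (G : SimpleGraph V) (W X Y : Finset V) : Prop :=
  ∀ x ∈ X, ∀ y ∈ Y, ¬ AvoidReach G W x y

/-- `R_{G−W}(X \ W)`: the set of vertices reachable from `X \ W` in `G − W`. -/
def ReachSet (G : SimpleGraph V) (W X : Finset V) : Set V :=
  {y | ∃ x ∈ X, AvoidReach G W x y}

/-- An important `X`-`Y` separator. -/
def IsImpSep (G : SimpleGraph V) (X Y W : Finset V) : Prop :=
  IsSepSet G W X Y ∧
  (∀ W' ⊆ W, W' ≠ W → ¬ IsSepSet G W' X Y) ∧
  ∀ W' : Finset V, IsSepSet G W' X Y → W'.card ≤ W.card →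
    ¬ (ReachSet G W X ⊂ ReachSet G W' X)

/-- A `k`-important `X`-`Y` separator. -/
def IsKImpSep (G : SimpleGraph V) (k : ℕ) (X Y W : Finset V) : Prop :=
  IsImpSep G X Y W ∧ W.card ≤ k ∧
  ∀ W' : Finset V, IsImpSep G X Y W' → W'.card ≤ k → W' ≠ W →
    ¬ (ReachSet G W X ⊆ ReachSet G W' X)

/-- The `k`-important separator extension of `D`. -/
def KImpExt (G : SimpleGraph V) (D : Finset V) (k : ℕ) : Set V :=
  {u | (∃ v, v ≠ u ∧ ∃ S : Finset V, IsKImpSep G k {v} D S ∧ u ∈ S) ∨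
       (({u} : Finset V).card ≤ k ∧ IsSepSet G {u} {u} D ∧
        ∀ S : Finset V, IsSepSet G S {u} D → S.card ≤ k → S = {u})}

/-- `C` is (the vertex set of) a connected component of `G − A`. -/
def IsCompAvoiding (G : SimpleGraph V) (A : Set V) (C : Set V) : Prop :=
  ∃ x, x ∉ A ∧ C = {y | ∃ p : G.Walk x y, ∀ v ∈ p.support, v ∉ A}

/-- `C` is (the vertex set of) a connected component of the induced subgraph `G[S]`. -/
def IsCompWithin (G : SimpleGraph V) (S : Set V) (C : Set V) : Prop :=
  ∃ x ∈ S, C = {y | ∃ p : G.Walk x y, ∀ v ∈ p.support, v ∈ S}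

/-- The (open) neighborhood of a vertex set `C` in `G`. -/
def nbhdSet (G : SimpleGraph V) (C : Set V) : Set V :=
  {v | v ∉ C ∧ ∃ c ∈ C, G.Adj v c}

/-- A connectivity-sensitive star decomposition of `G`, given by its central bag and its
set of leaf bags. -/
structure ConnSensStar (G : SimpleGraph V) where
  center : Finset V
  leaves : Finset (Finset V)
  cover : ∀ v : V, v ∈ center ∨ ∃ L ∈ leaves, v ∈ L
  edges : ∀ x y : V, G.Adj x y →
    (x ∈ center ∧ y ∈ center) ∨ ∃ L ∈ leaves, x ∈ L ∧ y ∈ L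
  inter : ∀ L ∈ leaves, ∀ L' ∈ leaves, L ≠ L' → ∀ v ∈ L, v ∈ L' → v ∈ center
  adh_distinct : ∀ L ∈ leaves, ∀ L' ∈ leaves, L ∩ center = L' ∩ center → L = L'
  comp_nbhd : ∀ L ∈ leaves, ∀ C : Set V,
    IsCompWithin G ((↑L : Set V) \ (↑center : Set V)) C → nbhdSet G C = ↑(L ∩ center)

/-- `(A,B)` is an `S`-stable separation of `G`. -/
def IsStableSep (G : SimpleGraph V) (S : Finset V) (A B : Finset V) : Prop :=
  IsSep G A B ∧ ∃ SL SR : Finset V, SL ∪ SR = S ∧ SL ∩ SR = ∅ ∧ SL ⊆ A ∧ SR ⊆ B ∧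
    ∀ A' B' : Finset V, IsSep G A' B' → SL ⊆ A' → SR ⊆ B' → (A ∩ B).card ≤ (A' ∩ B').card

/-- A `Λ`-boundaried graph: a graph together with an injective partial assignment of
labels to (boundary) vertices. -/
structure BGraph (Λ : Type*) (V : Type*) where
  G : SimpleGraph V
  bd : Λ → Option V
  inj : ∀ l l' v, bd l = some v → bd l' = some v → l = l'

/-- `K` (with embeddings `f₁`, `f₂`) is the gluing `H₁ ⊕ H₂` of two boundaried graphs:
vertices of equal label are identified, and an edge is present iff it is present in
(at least) one of the two graphs. -/
def IsGluing {Λ V₁ V₂ W : Type*} (H₁ : BGraph Λ V₁) (H₂ : BGraph Λ V₂)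
    (K : SimpleGraph W) (f₁ : V₁ → W) (f₂ : V₂ → W) : Prop :=
  Function.Injective f₁ ∧ Function.Injective f₂ ∧
  (∀ w : W, (∃ a, f₁ a = w) ∨ (∃ b, f₂ b = w)) ∧
  (∀ a b, f₁ a = f₂ b ↔ ∃ l, H₁.bd l = some a ∧ H₂.bd l = some b) ∧
  (∀ x y : W, K.Adj x y ↔
    (∃ a b, f₁ a = x ∧ f₁ b = y ∧ H₁.G.Adj a b) ∨
    (∃ a b, f₂ a = x ∧ f₂ b = y ∧ H₂.G.Adj a b))

/-- The weak cut signature value of the boundaried graph `H` at `(A', B')` is at most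
`n − |A' ∩ B'|`: there is a separation of order at most `n` whose sides contain the
boundary vertices labeled by `A'` and `B'`, respectively. -/
def WeakSigLE {Λ : Type*} {V : Type*} [Fintype V] [DecidableEq V]
    (H : BGraph Λ V) (A' B' : Finset Λ) (n : ℕ) : Prop :=
  ∃ A B : Finset V, IsSep H.G A B ∧
    (∀ l ∈ A', ∀ v, H.bd l = some v → v ∈ A) ∧
    (∀ l ∈ B', ∀ v, H.bd l = some v → v ∈ B) ∧ (A ∩ B).card ≤ n

/-- Two `Λ`-boundaried graphs have the same weak cut signature. -/
def SameWeakSig {Λ : Type*} [Fintype Λ] [DecidableEq Λ] {V₁ V₂ : Type*}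
    [Fintype V₁] [DecidableEq V₁] [Fintype V₂] [DecidableEq V₂]
    (H₁ : BGraph Λ V₁) (H₂ : BGraph Λ V₂) : Prop :=
  ∀ A' B' : Finset Λ, A' ∪ B' = Finset.univ →
    ∀ n : ℕ, WeakSigLE H₁ A' B' n ↔ WeakSigLE H₂ A' B' n

/-!
A separation `(L, R)` of order `i` leaves at most `q₁(i)` vertices of `D` on one side, say `L`.
Moving `L ∩ D` into the separator gives a separation of order at most `i + q₁(i) ≤ t₂` with `D`
entirely on the right, so tiedness bounds `|L ∩ A|` by `q₂(i + q₁(i))`.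
-/

theorem IsSep.symm {G : SimpleGraph V} {L R : Finset V} (h : IsSep G L R) : IsSep G R L :=
  ⟨by rw [union_comm, h.1], fun a ha ha' b hb hb' hab => h.2 b hb hb' a ha ha' hab.symm⟩

theorem IsSep.union_right_of_subset_left {G : SimpleGraph V} {L R S : Finset V}
    (h : IsSep G L R) (hS : S ⊆ L) : IsSep G L (R ∪ S) := by
  refine ⟨by rw [← union_assoc, h.1, union_eq_left.2 (subset_univ S)],
    fun a ha haRS b hbRS hbL => ?_⟩
  have hbR : b ∈ R := (mem_union.1 hbRS).resolve_right fun hbS => hbL (hS hbS)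
  exact h.2 a ha (fun haR => haRS (mem_union_left _ haR)) b hbR hbL

theorem IsSep.subset_union_inter {G : SimpleGraph V} {L R : Finset V} (h : IsSep G L R)
    (D : Finset V) : D ⊆ R ∪ (L ∩ D) := by
  intro v hv
  rcases mem_union.1 (h.1 ▸ mem_univ v) with hvL | hvR
  · exact mem_union_right _ (mem_inter.2 ⟨hvL, hv⟩)
  · exact mem_union_left _ hvR

theorem IsSep.card_inter_le_of_tied {G : SimpleGraph V} {L R D A : Finset V} {t : ℕ}
    {q : ℕ → ℕ} (hq : Monotone q)
    (hA : ∀ L R : Finset V, IsSep G L R → 1 ≤ (L ∩ R).card → (L ∩ R).card ≤ t →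
      D ⊆ R → (L ∩ A).card ≤ q (L ∩ R).card)
    (h : IsSep G L R) (h1 : 1 ≤ (L ∩ R).card) (ht : (L ∩ R).card + (L ∩ D).card ≤ t) :
    (L ∩ A).card ≤ q ((L ∩ R).card + (L ∩ D).card) := by
  have hsep : IsSep G L (R ∪ (L ∩ D)) := h.union_right_of_subset_left inter_subset_left
  have hcut : L ∩ (R ∪ (L ∩ D)) = L ∩ R ∪ L ∩ D := by
    rw [inter_union_distrib_left, ← inter_assoc, inter_self]
  have hle : (L ∩ (R ∪ (L ∩ D))).card ≤ (L ∩ R).card + (L ∩ D).card :=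
    hcut ▸ card_union_le _ _
  have hge : 1 ≤ (L ∩ (R ∪ (L ∩ D))).card :=
    h1.trans (card_le_card (hcut ▸ subset_union_left))
  exact (hA _ _ hsep hge (hle.trans ht) (h.subset_union_inter D)).trans (hq hle)

theorem tied_plus_unbreakable_gives_unbreakable_general (G : SimpleGraph V) (t₂ t₃ : ℕ)
    (q₁ q₂ : ℕ → ℕ) (hq₁ : Monotone q₁) (hq₂ : Monotone q₂)
    (ht₃ : t₃ + q₁ t₃ ≤ t₂ ∧ ∀ j : ℕ, j + q₁ j ≤ t₂ → j ≤ t₃)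
    (D A : Finset V)
    (hD : ∀ L R : Finset V, IsSep G L R →
      (L ∩ D).card ≤ q₁ (L ∩ R).card ∨ (R ∩ D).card ≤ q₁ (L ∩ R).card)
    (hA : ∀ L R : Finset V, IsSep G L R → 1 ≤ (L ∩ R).card → (L ∩ R).card ≤ t₂ →
      D ⊆ R → (L ∩ A).card ≤ q₂ (L ∩ R).card) :
    ∀ L R : Finset V, IsSep G L R → 1 ≤ (L ∩ R).card → (L ∩ R).card ≤ t₃ →
      (L ∩ A).card ≤ q₂ ((L ∩ R).card + q₁ (L ∩ R).card) ∨
      (R ∩ A).card ≤ q₂ ((L ∩ R).card + q₁ (L ∩ R).card) := by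
  intro L R hsep h1 h3
  set k := (L ∩ R).card
  have hk : k + q₁ k ≤ t₂ := (add_le_add h3 (hq₁ h3)).trans ht₃.1
  have side : ∀ L' R' : Finset V, IsSep G L' R' → (L' ∩ R').card = k →
      (L' ∩ D).card ≤ q₁ k → (L' ∩ A).card ≤ q₂ (k + q₁ k) := by
    intro L' R' hsep' horder hD'
    have hsum : (L' ∩ R').card + (L' ∩ D).card ≤ k + q₁ k := by omega
    exact (hsep'.card_inter_le_of_tied hq₂ hA (horder ▸ h1) (hsum.trans hk)).trans (hq₂ hsum)
  exact (hD L R hsep).imp (side L R hsep rfl) (side R L hsep.symm (inter_comm R L ▸ rfl))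

/-- if `D` is `q₁`-unbreakable in `G` and `A` is `q₂`-unbreakability-tied
to `D` (with `q₂` defined on `[t₂]`), then `A` is `q₃`-unbreakable, where
`q₃(i) = q₂(i + q₁(i))` on `[t₃]`, `t₃` being the largest `j` with `j + q₁(j) ≤ t₂`. -/
theorem tied_plus_unbreakable_gives_unbreakable (G : SimpleGraph V) (t₂ t₃ : ℕ)
    (q₁ q₂ : ℕ → ℕ) (hq₁ : Monotone q₁) (hq₂ : Monotone q₂) (ht₂ : 1 + q₁ 1 ≤ t₂)
    (ht₃ : t₃ + q₁ t₃ ≤ t₂ ∧ ∀ j : ℕ, j + q₁ j ≤ t₂ → j ≤ t₃)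
    (D A : Finset V)
    (hD : ∀ L R : Finset V, IsSep G L R →
      (L ∩ D).card ≤ q₁ (L ∩ R).card ∨ (R ∩ D).card ≤ q₁ (L ∩ R).card)
    (hA : ∀ L R : Finset V, IsSep G L R → 1 ≤ (L ∩ R).card → (L ∩ R).card ≤ t₂ →
      D ⊆ R → (L ∩ A).card ≤ q₂ (L ∩ R).card) :
    ∀ L R : Finset V, IsSep G L R → 1 ≤ (L ∩ R).card → (L ∩ R).card ≤ t₃ →
      (L ∩ A).card ≤ q₂ ((L ∩ R).card + q₁ (L ∩ R).card) ∨
      (R ∩ A).card ≤ q₂ ((L ∩ R).card + q₁ (L ∩ R).card) :=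
  tied_plus_unbreakable_gives_unbreakable_general G t₂ t₃ q₁ q₂ hq₁ hq₂ ht₃ D A hD hA
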